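/- arXiv:1110.3030 — 2 statements merged into one kernel-verified Lean document; each statement's English description precedes it below -/
import Mathlib

section
/- Let n ≥ 1 and N := 2ⁿ. The polynomial F⁽ⁿ⁾ is monic of degree N in Y over ℂ[T,U], so its partial derivative with respect to T, specialized at T = 0, has degree less than N in Y; define L_l ∈ ℂ[U₁,…,Uₙ] for 1 ≤ l ≤ N as the coefficient of Y^{N−l} in (∂F⁽ⁿ⁾/∂T)(0, U, Y). Then the polynomials L₁, …, L_N are linearly independent over ℂ. -/
open MvPolynomial

/-- Variable index type for `ℂ[T, U₁, …, Uₙ, Y]` : `T`, the `Uᵢ`, and `Y`. -/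
abbrev TUYVar (n : ℕ) := Unit ⊕ Fin n ⊕ Unit

noncomputable def Tv (n : ℕ) : MvPolynomial (TUYVar n) ℂ := X (Sum.inl ())
noncomputable def Uv (n : ℕ) (i : Fin n) : MvPolynomial (TUYVar n) ℂ := X (Sum.inr (Sum.inl i))
noncomputable def Yv (n : ℕ) : MvPolynomial (TUYVar n) ℂ := X (Sum.inr (Sum.inr ()))

/-- `F⁽ⁿ⁾ := ∏_{j=0}^{2ⁿ−1} (Y − (j + T·∏ᵢ Uᵢ^{[j]ᵢ}))`. -/
noncomputable def Fpoly (n : ℕ) : MvPolynomial (TUYVar n) ℂ :=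
  ∏ j ∈ Finset.range (2 ^ n),
    (Yv n - ((j : MvPolynomial (TUYVar n) ℂ) +
      Tv n * ∏ i : Fin n, Uv n i ^ (if Nat.testBit j (i : ℕ) then 1 else 0)))

/-- Substitute `T := 0`, keep the `Uᵢ` as coefficients and make `Y` the
polynomial variable, landing in `ℂ[U₁,…,Uₙ][Y]`. -/
noncomputable def substT0 (n : ℕ) :
    MvPolynomial (TUYVar n) ℂ →ₐ[ℂ] Polynomial (MvPolynomial (Fin n) ℂ) :=
  aeval (fun v => match v with
    | Sum.inl () => 0
    | Sum.inr (Sum.inl i) => Polynomial.C (X i)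
    | Sum.inr (Sum.inr ()) => Polynomial.X)

/-- `L_l` := coefficient of `Y^{N−l}` in `(∂F⁽ⁿ⁾/∂T)(0,U,Y)`, for `1 ≤ l ≤ N`,
indexed here by `l : Fin N` (so `l` stands for `l+1`). -/
noncomputable def Lcoeff (n : ℕ) (l : Fin (2 ^ n)) : MvPolynomial (Fin n) ℂ :=
  (substT0 n (pderiv (Sum.inl ()) (Fpoly n))).coeff (2 ^ n - ((l : ℕ) + 1))

open Polynomial in
noncomputable def qpoly (N j : ℕ) : Polynomial ℂ :=
  ∏ k ∈ (Finset.range N).erase j, (Polynomial.X - Polynomial.C (k : ℂ))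

noncomputable def mon (n : ℕ) (j : ℕ) : MvPolynomial (Fin n) ℂ :=
  ∏ i : Fin n, X i ^ (if Nat.testBit j (i : ℕ) then 1 else 0)

lemma pderiv_finset_prod {σ : Type*} {ι : Type*} [DecidableEq ι] (v : σ) (s : Finset ι)
    (f : ι → MvPolynomial σ ℂ) :
    pderiv v (∏ j ∈ s, f j) = ∑ j ∈ s, pderiv v (f j) * ∏ k ∈ s.erase j, f k := by
  induction s using Finset.induction_on with
  | empty => simp
  | insert a s ha ih =>
    rw [Finset.prod_insert ha, pderiv_mul, ih, Finset.sum_insert ha, Finset.erase_insert ha,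
      Finset.mul_sum]
    congr 1
    refine Finset.sum_congr rfl fun j hj => ?_
    rw [Finset.erase_insert_of_ne (by rintro rfl; exact ha hj),
      Finset.prod_insert (by simp [ha])]
    ring

lemma key (n : ℕ) :
    substT0 n (pderiv (Sum.inl ()) (Fpoly n)) =
      ∑ j ∈ Finset.range (2 ^ n), Polynomial.C (-(mon n j)) *
        Polynomial.map MvPolynomial.C (qpoly (2 ^ n) j) := by
  rw [Fpoly, pderiv_finset_prod, map_sum]
  refine Finset.sum_congr rfl fun j hj => ?_
  rw [map_mul]
  congr 1
  · -- substT0 of pderiv of the j-th factor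
    simp only [Tv, Uv, Yv]
    simp [pderiv_mul, pderiv_X, mon, substT0, map_prod, apply_ite, map_neg]
  · rw [qpoly, Polynomial.map_prod, map_prod]
    refine Finset.prod_congr rfl fun k hk => ?_
    simp [substT0, Tv, Uv, Yv, Polynomial.map_sub]

lemma Lcoeff_eq (n : ℕ) (l : Fin (2 ^ n)) :
    Lcoeff n l = ∑ j ∈ Finset.range (2 ^ n),
      (-(qpoly (2 ^ n) j).coeff (2 ^ n - ((l : ℕ) + 1))) • mon n j := by
  rw [Lcoeff, key, Polynomial.finset_sum_coeff]
  refine Finset.sum_congr rfl fun j hj => ?_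
  rw [Polynomial.coeff_C_mul, Polynomial.coeff_map]
  simp only [smul_eq_C_mul, MvPolynomial.algebraMap_eq, map_neg]
  ring

noncomputable def bvec (n j : ℕ) : Fin n →₀ ℕ :=
  ∑ i : Fin n, Finsupp.single i (if Nat.testBit j (i : ℕ) then 1 else 0)

lemma bvec_apply (n j : ℕ) (i : Fin n) :
    bvec n j i = if Nat.testBit j (i : ℕ) then 1 else 0 := by
  classical
  simp [bvec, Finsupp.single_apply, Finset.sum_ite_eq]

lemma mon_eq (n j : ℕ) : mon n j = monomial (bvec n j) 1 := by
  rw [bvec, monomial_sum_index, map_one, one_mul, mon]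
  exact Finset.prod_congr rfl fun i _ => X_pow_eq_monomial

lemma bvec_inj (n : ℕ) {j j' : ℕ} (hj : j < 2 ^ n) (hj' : j' < 2 ^ n)
    (h : bvec n j = bvec n j') : j = j' := by
  apply Nat.eq_of_testBit_eq
  intro i
  rcases lt_or_ge i n with hi | hi
  · have := congrArg (fun f => f ⟨i, hi⟩) h
    simp only [bvec_apply] at this
    by_cases h1 : Nat.testBit j i <;> by_cases h2 : Nat.testBit j' i <;>
      simp [h1, h2] at this ⊢
  · have e1 : j < 2 ^ i := lt_of_lt_of_le hj (Nat.pow_le_pow_right (by norm_num) hi)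
    have e2 : j' < 2 ^ i := lt_of_lt_of_le hj' (Nat.pow_le_pow_right (by norm_num) hi)
    rw [Nat.testBit_eq_false_of_lt e1, Nat.testBit_eq_false_of_lt e2]

lemma qpoly_natDegree_lt (N j : ℕ) (hN : 0 < N) (hj : j < N) :
    (qpoly N j).natDegree < N := by
  rw [qpoly, Polynomial.natDegree_prod_of_monic _ _ (fun k _ => Polynomial.monic_X_sub_C _)]
  simp only [Polynomial.natDegree_X_sub_C, Finset.sum_const, smul_eq_mul, mul_one]
  rw [Finset.card_erase_of_mem (Finset.mem_range.2 hj), Finset.card_range]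
  omega

lemma qpoly_eval_self_ne_zero (N j : ℕ) : (qpoly N j).eval (j : ℂ) ≠ 0 := by
  rw [qpoly, Polynomial.eval_prod]
  rw [Finset.prod_ne_zero_iff]
  intro t ht
  simp only [Polynomial.eval_sub, Polynomial.eval_X, Polynomial.eval_C, sub_ne_zero]
  exact fun hc => (Finset.ne_of_mem_erase ht) (Nat.cast_injective hc).symm

lemma qpoly_eval_expand (n : ℕ) (j : Fin (2 ^ n)) (x : ℂ) :
    (qpoly (2 ^ n) (j : ℕ)).eval x
      = ∑ l : Fin (2 ^ n), (qpoly (2 ^ n) (j : ℕ)).coeff (2 ^ n - ((l : ℕ) + 1)) *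
          x ^ (2 ^ n - ((l : ℕ) + 1)) := by
  rw [Polynomial.eval_eq_sum_range' (qpoly_natDegree_lt _ _ (Nat.pow_pos (by norm_num)) j.isLt) x,
    ← Finset.sum_range_reflect]
  refine Eq.trans ?_ (Fin.sum_univ_eq_sum_range
    (fun i => (qpoly (2 ^ n) (j : ℕ)).coeff (2 ^ n - (i + 1)) * x ^ (2 ^ n - (i + 1))) (2 ^ n)).symm
  refine Finset.sum_congr rfl fun i _ => ?_
  have : 2 ^ n - 1 - i = 2 ^ n - (i + 1) := by omega
  rw [this]

lemma qpoly_eval_ne (n : ℕ) (k j : Fin (2 ^ n)) (hkj : k ≠ j) :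
    (qpoly (2 ^ n) (j : ℕ)).eval ((k : ℕ) : ℂ) = 0 := by
  rw [qpoly, Polynomial.eval_prod]
  refine Finset.prod_eq_zero (i := (k : ℕ)) ?_ (by simp)
  exact Finset.mem_erase.2 ⟨fun h => hkj (Fin.val_injective h), Finset.mem_range.2 k.isLt⟩

theorem statement1' (n : ℕ) : LinearIndependent ℂ (Lcoeff n) := by
  classical
  set N := 2 ^ n with hN
  set B : Matrix (Fin N) (Fin N) ℂ :=
    Matrix.of fun l j => (qpoly N (j : ℕ)).coeff (N - ((l : ℕ) + 1)) with hB
  -- B has nonzero determinant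
  have hdetB : B.det ≠ 0 := by
    set W : Matrix (Fin N) (Fin N) ℂ :=
      Matrix.of fun k l => (((k : ℕ) : ℂ)) ^ (N - ((l : ℕ) + 1)) with hW
    have hWB : W * B = Matrix.diagonal fun j : Fin N => (qpoly N (j : ℕ)).eval ((j : ℕ) : ℂ) := by
      ext k j
      rw [Matrix.mul_apply]
      by_cases hkj : k = j
      · subst hkj
        rw [Matrix.diagonal_apply_eq, qpoly_eval_expand]
        exact Finset.sum_congr rfl fun l _ => mul_comm _ _
      · rw [Matrix.diagonal_apply_ne _ hkj, ← qpoly_eval_ne n k j hkj, qpoly_eval_expand]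
        exact Finset.sum_congr rfl fun l _ => mul_comm _ _
    have hdiag : (Matrix.diagonal fun j : Fin N => (qpoly N (j : ℕ)).eval ((j : ℕ) : ℂ)).det ≠ 0 := by
      rw [Matrix.det_diagonal]
      exact Finset.prod_ne_zero_iff.2 fun j _ => qpoly_eval_self_ne_zero N j
    intro h
    rw [← hWB, Matrix.det_mul, h, mul_zero] at hdiag
    exact hdiag rfl
  set A : Matrix (Fin N) (Fin N) ℂ :=
    Matrix.of fun l j => -((qpoly N (j : ℕ)).coeff (N - ((l : ℕ) + 1))) with hA
  have hAB : A = -B := rfl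
  have hdetA : A.det ≠ 0 := by
    rw [hAB, Matrix.det_neg]
    exact mul_ne_zero (pow_ne_zero _ (neg_ne_zero.2 one_ne_zero)) hdetB
  -- monomials
  have hbinj : Function.Injective fun j : Fin N => bvec n (j : ℕ) := by
    intro j j' h
    exact Fin.val_injective (bvec_inj n j.isLt j'.isLt h)
  have hmli : LinearIndependent ℂ fun j : Fin N => monomial (bvec n (j : ℕ)) (1 : ℂ) := by
    have h := (basisMonomials (Fin n) ℂ).linearIndependent.comp _ hbinj
    rw [coe_basisMonomials] at h; exact h
  have hL : ∀ l : Fin N, Lcoeff n l = ∑ j : Fin N, A l j • monomial (bvec n (j : ℕ)) (1 : ℂ) := by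
    intro l
    rw [Lcoeff_eq]
    refine Eq.trans ?_ (Fin.sum_univ_eq_sum_range
      (fun j => -((qpoly N j).coeff (N - ((l : ℕ) + 1))) • (monomial (bvec n j) (1 : ℂ))) N).symm
    exact Finset.sum_congr rfl fun j _ => by rw [mon_eq]
  rw [Fintype.linearIndependent_iff]
  intro c hc
  have hsum : ∑ j : Fin N, (∑ l : Fin N, c l * A l j) • monomial (bvec n (j : ℕ)) (1 : ℂ) = 0 := by
    rw [← hc]
    simp only [hL, Finset.smul_sum, smul_smul, Finset.sum_smul]
    exact Finset.sum_comm
  have hAc : ∀ j, ∑ l : Fin N, c l * A l j = 0 :=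
    Fintype.linearIndependent_iff.1 hmli _ hsum
  have hmv : A.transpose.mulVec c = 0 := by
    funext j
    rw [Matrix.mulVec, dotProduct]
    simpa [Matrix.transpose_apply, mul_comm] using hAc j
  have hinj : Function.Injective A.transpose.mulVec :=
    Matrix.mulVec_injective_iff_isUnit.2
      ((Matrix.isUnit_iff_isUnit_det _).2 (by rw [Matrix.det_transpose]; exact hdetA.isUnit))
  intro i
  have : c = 0 := hinj (by rw [hmv, Matrix.mulVec_zero])
  simp [this]

/-- The polynomials `L₁, …, L_N ∈ ℂ[U₁,…,Uₙ]` (`N = 2ⁿ`)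
are linearly independent over `ℂ`. -/
theorem statement1 (n : ℕ) (hn : 1 ≤ n) :
    LinearIndependent ℂ (Lcoeff n) := statement1' n
end

section
/- Let k, m ≥ 1, let F ∈ ℂ[Z₁,…,Z_k] be irreducible, let P₁, …, P_m ∈ ℂ[Z₁,…,Z_k] be nonzero polynomials and let R ∈ ℂ[Z₁,…,Z_k]. Assume that the set A := { z ∈ ℂ^k : P₁(z) = ⋯ = P_m(z) = 0 and R(z) ≠ 0 } is nonempty and that A ⊆ { z ∈ ℂ^k : F(z) = 0 }. Then F does not divide R, and every irreducible polynomial h ∈ ℂ[Z₁,…,Z_k] which divides all of P₁, …, P_m either divides R or is an associate of F. -/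
open MvPolynomial

lemma dvd_of_zeros {n : ℕ} {h g : MvPolynomial (Fin n) ℂ} (hh : Irreducible h)
    (H : ∀ z : Fin n → ℂ, eval z h = 0 → eval z g = 0) : h ∣ g := by
  have hg : g ∈ (Ideal.span {h} : Ideal (MvPolynomial (Fin n) ℂ)).radical := by
    rw [← MvPolynomial.vanishingIdeal_zeroLocus_eq_radical (K := ℂ)]
    rw [MvPolynomial.mem_vanishingIdeal_iff]
    intro x hx
    rw [MvPolynomial.mem_zeroLocus_iff] at hx
    exact H x (hx h (Ideal.subset_span rfl))
  obtain ⟨N, hN⟩ := hg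
  rw [Ideal.mem_span_singleton] at hN
  exact hh.prime.dvd_of_dvd_pow hN

/-- Let `F ∈ ℂ[Z₁,…,Z_k]` be irreducible, let `P₁,…,P_m` be
nonzero polynomials and let `R` be a polynomial.  If the set
`A := {z : P₁(z) = ⋯ = P_m(z) = 0 ∧ R(z) ≠ 0}` is nonempty and contained in the
zero set of `F`, then `F` does not divide `R`, and every irreducible common divisor
`h` of `P₁,…,P_m` either divides `R` or is an associate of `F`. -/
theorem statement17 (k m : ℕ) (hk : 1 ≤ k) (hm : 1 ≤ m)
    (F : MvPolynomial (Fin k) ℂ) (hF : Irreducible F)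
    (P : Fin m → MvPolynomial (Fin k) ℂ) (hP : ∀ i, P i ≠ 0)
    (R : MvPolynomial (Fin k) ℂ)
    (hA : {z : Fin k → ℂ | (∀ i, eval z (P i) = 0) ∧ eval z R ≠ 0}.Nonempty)
    (hAF : {z : Fin k → ℂ | (∀ i, eval z (P i) = 0) ∧ eval z R ≠ 0} ⊆
      {z : Fin k → ℂ | eval z F = 0}) :
    ¬ (F ∣ R) ∧
    ∀ h : MvPolynomial (Fin k) ℂ, Irreducible h → (∀ i, h ∣ P i) →
      (h ∣ R ∨ Associated h F) := by
  constructor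
  · rintro ⟨Q, rfl⟩
    obtain ⟨z, hz⟩ := hA
    have hFz := hAF hz
    exact hz.2 (by simp only [eval_mul]; exact mul_eq_zero.mpr (Or.inl hFz))
  · intro h hh hdvd
    by_cases hR : h ∣ R
    · exact Or.inl hR
    right
    -- every zero of h with R ≠ 0 is in A
    have key : ∀ z : Fin k → ℂ, eval z h = 0 → eval z (F * R) = 0 := by
      intro z hz
      rw [eval_mul]
      by_cases hRz : eval z R = 0
      · simp [hRz]
      · have hzA : z ∈ {z : Fin k → ℂ | (∀ i, eval z (P i) = 0) ∧ eval z R ≠ 0} := by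
          refine ⟨fun i => ?_, hRz⟩
          obtain ⟨Q, hQ⟩ := hdvd i
          rw [hQ, eval_mul, hz, zero_mul]
        have := hAF hzA
        exact mul_eq_zero.mpr (Or.inl this)
    have hdFR : h ∣ F * R := dvd_of_zeros hh key
    rcases hh.prime.dvd_or_dvd hdFR with hF' | hR'
    · exact hh.associated_of_dvd hF hF'
    · exact absurd hR' hR
end
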